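/- Recursive construction of optimal blocks (existence direction): if there exists a vector v_i ∈ F_2^Q such that both an optimal t_1-error-building block for v_i and an optimal t_2-error-building block for v_i ⊕ v are nonempty, then letting v_b minimize M(O_{t_1}(v_i)) + M(O_{t_2}(v_i ⊕ v)) over all v_i ∈ F_2^Q, the multiset sum O_{t_1}(v_b) ⊎ O_{t_2}(v_b ⊕ v) is an optimal (t_1+t_2)-error-building block for v, and its penalty equals M(O_{t_1}(v_b)) + M(O_{t_2}(v_b ⊕ v)). -/

import Mathlib

open scoped ENNReal

/-- Mod-2 sum of the columns of `h` indexed by the multiset `S` (with multiplicity). -/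
def colSum {N Q : ℕ} (h : Fin N → Fin Q → ZMod 2) (S : Multiset (Fin N)) :
    Fin Q → ZMod 2 :=
  (S.map h).sum

/-- Block penalty: sum of the nonnegative reliabilities over `S` (with multiplicity). -/
def penalty {N : ℕ} (w : Fin N → NNReal) (S : Multiset (Fin N)) : NNReal :=
  (S.map w).sum

/-- Minimal penalty of a `t`-error-building block for `v` (`⊤` if none exists). -/
noncomputable def mPen {N Q : ℕ} (h : Fin N → Fin Q → ZMod 2) (w : Fin N → NNReal)
    (t : ℕ) (v : Fin Q → ZMod 2) : ℝ≥0∞ :=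
  sInf ((fun S => ((penalty w S : NNReal) : ℝ≥0∞)) ''
    {S : Multiset (Fin N) | Multiset.card S = t ∧ colSum h S = v})

theorem Multiset.exists_eq_add_of_card_eq_add {α : Type*} {S : Multiset α} {t1 t2 : ℕ}
    (hS : Multiset.card S = t1 + t2) :
    ∃ S1 S2 : Multiset α, S = S1 + S2 ∧ Multiset.card S1 = t1 ∧ Multiset.card S2 = t2 := by
  have hne : 0 < Multiset.card (Multiset.powersetCard t1 S) := by
    rw [Multiset.card_powersetCard]
    exact Nat.choose_pos (by omega)
  obtain ⟨S1, hS1⟩ := Multiset.card_pos_iff_exists_mem.mp hne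
  obtain ⟨hle, hcard1⟩ := Multiset.mem_powersetCard.mp hS1
  obtain ⟨S2, rfl⟩ := Multiset.le_iff_exists_add.mp hle
  exact ⟨S1, S2, rfl, hcard1, by rw [Multiset.card_add] at hS; omega⟩

theorem Pi.charTwo_add_cancel_left {ι R : Type*} [Ring R] [CharP R 2] (x y : ι → R) :
    x + (x + y) = y :=
  funext fun _ => CharTwo.add_cancel_left _ _

section Blocks

variable {N Q : ℕ} (h : Fin N → Fin Q → ZMod 2) (w : Fin N → NNReal)

@[simp]
theorem colSum_add (S T : Multiset (Fin N)) : colSum h (S + T) = colSum h S + colSum h T := by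
  simp [colSum]

@[simp]
theorem penalty_add (S T : Multiset (Fin N)) : penalty w (S + T) = penalty w S + penalty w T := by
  simp [penalty]

variable {h w}

theorem mPen_le_penalty {t : ℕ} {v : Fin Q → ZMod 2} {S : Multiset (Fin N)}
    (hcard : Multiset.card S = t) (hsum : colSum h S = v) :
    mPen h w t v ≤ penalty w S :=
  sInf_le ⟨S, ⟨hcard, hsum⟩, rfl⟩

variable (h w)

/-- A `(t1 + t2)`-block `S1 + S2` for `v` is a `t1`-block for `colSum h S1` plus a `t2`-block for
`colSum h S1 + v`. -/
theorem iInf_mPen_add_le_mPen (t1 t2 : ℕ) (v : Fin Q → ZMod 2) :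
    ⨅ vi, mPen h w t1 vi + mPen h w t2 (vi + v) ≤ mPen h w (t1 + t2) v := by
  refine le_sInf ?_
  rintro _ ⟨S, ⟨hcard, rfl⟩, rfl⟩
  obtain ⟨S1, S2, rfl, hcard1, hcard2⟩ := Multiset.exists_eq_add_of_card_eq_add hcard
  calc ⨅ vi, mPen h w t1 vi + mPen h w t2 (vi + colSum h (S1 + S2))
      ≤ mPen h w t1 (colSum h S1) + mPen h w t2 (colSum h S1 + colSum h (S1 + S2)) :=
        iInf_le _ _
    _ ≤ penalty w S1 + penalty w S2 := by
        gcongr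
        · exact mPen_le_penalty hcard1 rfl
        · exact mPen_le_penalty hcard2 (by rw [colSum_add, Pi.charTwo_add_cancel_left])
    _ = penalty w (S1 + S2) := by simp

end Blocks

/-- combining an optimal `t₁`-block for the best decomposition vector `v_b`
with an optimal `t₂`-block for `v_b ⊕ v` yields an optimal `(t₁+t₂)`-block for `v`,
whose penalty is the sum of the two penalties. -/
theorem stmt2 {N Q : ℕ} (h : Fin N → Fin Q → ZMod 2) (w : Fin N → NNReal)
    (v vb : Fin Q → ZMod 2) (t1 t2 : ℕ) (B1 B2 : Multiset (Fin N))
    (hB1 : Multiset.card B1 = t1 ∧ colSum h B1 = vb ∧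
      ((penalty w B1 : NNReal) : ℝ≥0∞) = mPen h w t1 vb)
    (hB2 : Multiset.card B2 = t2 ∧ colSum h B2 = vb + v ∧
      ((penalty w B2 : NNReal) : ℝ≥0∞) = mPen h w t2 (vb + v))
    (hvb : ∀ vi : Fin Q → ZMod 2,
      mPen h w t1 vb + mPen h w t2 (vb + v) ≤ mPen h w t1 vi + mPen h w t2 (vi + v)) :
    Multiset.card (B1 + B2) = t1 + t2 ∧ colSum h (B1 + B2) = v ∧
    penalty w (B1 + B2) = penalty w B1 + penalty w B2 ∧
    mPen h w (t1 + t2) v = ((penalty w (B1 + B2) : NNReal) : ℝ≥0∞) := by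
  obtain ⟨hcard1, hsum1, hopt1⟩ := hB1
  obtain ⟨hcard2, hsum2, hopt2⟩ := hB2
  have hcard : Multiset.card (B1 + B2) = t1 + t2 := by simp [hcard1, hcard2]
  have hsum : colSum h (B1 + B2) = v := by
    rw [colSum_add, hsum1, hsum2, Pi.charTwo_add_cancel_left]
  refine ⟨hcard, hsum, penalty_add w B1 B2, le_antisymm (mPen_le_penalty hcard hsum) ?_⟩
  calc ((penalty w (B1 + B2) : NNReal) : ℝ≥0∞) = mPen h w t1 vb + mPen h w t2 (vb + v) := by
        rw [penalty_add, ENNReal.coe_add, hopt1, hopt2]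
    _ ≤ ⨅ vi, mPen h w t1 vi + mPen h w t2 (vi + v) := le_iInf hvb
    _ ≤ mPen h w (t1 + t2) v := iInf_mPen_add_le_mPen h w t1 t2 v
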